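/- For a = 1/2, λ = 1, and β > 0, the approximation error of the squashing function is bounded: |S^{(β)}_{1/2,1}(x) - [x]| ≤ (ln 2)/β for all real x, where [·] is the cutting function. -/

import Mathlib

/-! Writing `log (1 + exp y) = max 0 y + g y` with `0 ≤ g y ≤ log 2`, and `[x] = max 0 x - max 0 (x - 1)`,
the scaled error `β (S⁽ᵝ⁾(x) - [x])` becomes `g (β x) - g (β (x - 1))`: a difference of two numbers
in `[0, log 2]`. -/

noncomputable def cut (x : ℝ) : ℝ := max 0 (min 1 x)

noncomputable def squash (β x : ℝ) : ℝ :=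
  (1 / β) * Real.log ((1 + Real.exp (β * x)) / (1 + Real.exp (β * (x - 1))))

open Real Set

lemma max_zero_le_log_one_add_exp (y : ℝ) : max 0 y ≤ log (1 + exp y) := by
  rw [le_log_iff_exp_le (by positivity), exp_monotone.map_max, exp_zero]
  exact max_le (by linarith [exp_pos y]) (by linarith)

lemma log_one_add_exp_le_max_zero_add_log_two (y : ℝ) :
    log (1 + exp y) ≤ max 0 y + log 2 := by
  rw [log_le_iff_le_exp (by positivity), exp_add, exp_log two_pos, exp_monotone.map_max, exp_zero]
  linarith [le_max_left 1 (exp y), le_max_right 1 (exp y)]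

lemma log_one_add_exp_sub_max_zero_mem_Icc (y : ℝ) :
    log (1 + exp y) - max 0 y ∈ Icc 0 (log 2) :=
  ⟨sub_nonneg.2 (max_zero_le_log_one_add_exp y),
    sub_le_iff_le_add'.2 (log_one_add_exp_le_max_zero_add_log_two y)⟩

lemma cut_eq_max_zero_sub_max_zero (x : ℝ) : cut x = max 0 x - max 0 (x - 1) := by
  unfold cut
  rcases le_total x 0 with h | h <;> rcases le_total x 1 with h' | h'
  · simp [h, h', sub_nonpos.2]
  · linarith
  · simp [h, h', sub_nonpos.2]
  · simp [h, h', sub_nonneg.2]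

lemma mul_squash {β : ℝ} (hβ : β ≠ 0) (x : ℝ) :
    β * squash β x = log (1 + exp (β * x)) - log (1 + exp (β * (x - 1))) := by
  rw [squash, ← mul_assoc, mul_one_div_cancel hβ, one_mul, log_div (by positivity) (by positivity)]

lemma mul_cut {β : ℝ} (hβ : 0 ≤ β) (x : ℝ) :
    β * cut x = max 0 (β * x) - max 0 (β * (x - 1)) := by
  rw [cut_eq_max_zero_sub_max_zero, mul_sub, mul_max_of_nonneg _ _ hβ, mul_max_of_nonneg _ _ hβ,
    mul_zero]

theorem squash_error_bound (β x : ℝ) (hβ : 0 < β) :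
    |squash β x - cut x| ≤ Real.log 2 / β := by
  have hscaled : β * (squash β x - cut x) =
      (log (1 + exp (β * x)) - max 0 (β * x)) -
        (log (1 + exp (β * (x - 1))) - max 0 (β * (x - 1))) := by
    rw [mul_sub, mul_squash hβ.ne', mul_cut hβ.le]
    ring
  obtain ⟨h₀, h₁⟩ := log_one_add_exp_sub_max_zero_mem_Icc (β * x)
  obtain ⟨h₂, h₃⟩ := log_one_add_exp_sub_max_zero_mem_Icc (β * (x - 1))
  have hbound : |β * (squash β x - cut x)| ≤ log 2 :=
    hscaled ▸ abs_sub_le_of_nonneg_of_le h₀ h₁ h₂ h₃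
  rwa [abs_mul, abs_of_pos hβ, ← le_div_iff₀' hβ] at hbound
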